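/- With the notation of the twist-by-grading construction: let D be self-adjoint anticommuting with Γ, π₀ a representation commuting with Γ such that [D, π₀(a)] is bounded for all a ∈ A, π(a,a') := p₊π₀(a) + p₋π₀(a'), and ρ(a,a') := (a',a). Then for every (a,a') ∈ A ⊕ A the twisted commutator D π(a,a') − π(ρ(a,a')) D is bounded; in fact it equals p₊[D, π₀(a')]p₋ + p₋[D, π₀(a)]p₊. -/

import Mathlib

/-- The twist-by-grading representation `π(a,a') := p₊ π₀(a) + p₋ π₀(a')`,
with `p± := (1 ± Γ)/2`. -/
noncomputable def twistRep {H A : Type*} [NormedAddCommGroup H] [InnerProductSpace ℂ H]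
    [CompleteSpace H] [Ring A] [StarRing A] [Algebra ℂ A] [StarModule ℂ A]
    (Γ : H →L[ℂ] H) (π₀ : A →⋆ₐ[ℂ] (H →L[ℂ] H)) (p : A × A) : H →L[ℂ] H :=
  ((2 : ℂ)⁻¹ • (1 + Γ)) * π₀ p.1 + ((2 : ℂ)⁻¹ • (1 - Γ)) * π₀ p.2

/-!
Write `p₊ = (1 + Γ)/2` and `p₋ = (1 - Γ)/2`. Anticommutation with `Γ` means `D p₊ = p₋ D`,
so `D` exchanges the two eigenspaces of `Γ`, while every `π₀ a` commutes with `p₊` and `p₋`.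
In the resulting block decomposition the diagonal blocks of `D π(a,a') - π(a',a) D` cancel,
and its off-diagonal blocks are those of the ordinary commutators `[D, π₀(a')]` and `[D, π₀(a)]`.
This is an identity in the ring of linear endomorphisms of `H`; boundedness follows by
substituting the bounded extensions of the two commutators.
-/

section ComplementaryIdempotents

variable {R : Type*} [Ring R] {p q d a b : R}

theorem mul_commutator_eq_commutator_mul (hpd : p * d = d * q) (hbp : Commute b p)
    (hbq : Commute b q) : p * (d * b - b * d) = (d * b - b * d) * q := by
  rw [mul_sub, sub_mul, ← mul_assoc, hpd, mul_assoc, ← hbq.eq, ← mul_assoc p b, ← hbp.eq,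
    mul_assoc b, hpd]
  simp only [mul_assoc]

theorem twisted_commutator_eq (hpq : p + q = 1) (hp : IsIdempotentElem p)
    (hdp : d * p = q * d) (ha : Commute a p) (hb : Commute b p) :
    d * (p * a + q * b) - (p * b + q * a) * d
      = p * (d * b - b * d) * q + q * (d * a - a * d) * p := by
  have hq : q = 1 - p := eq_sub_of_add_eq' hpq
  have hpd : p * d = d * q := by rw [hq, mul_sub, hdp, hq]; noncomm_ring
  have commute_q {c : R} (hc : Commute c p) : Commute c q :=
    hq ▸ (Commute.one_right c).sub_right hc
  have hq_idem : IsIdempotentElem q := hq ▸ hp.one_sub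
  rw [mul_commutator_eq_commutator_mul hpd hb (commute_q hb),
    mul_commutator_eq_commutator_mul hdp.symm (commute_q ha) ha,
    mul_assoc, hq_idem.eq, mul_assoc, hp.eq]
  calc d * (p * a + q * b) - (p * b + q * a) * d
      = d * (a * p) + d * (b * q) - b * (p * d) - a * (q * d) := by
        rw [← ha.eq, ← hb.eq, ← (commute_q ha).eq, ← (commute_q hb).eq]; noncomm_ring
    _ = d * (a * p) + d * (b * q) - b * (d * q) - a * (d * p) := by rw [hpd, hdp]
    _ = (d * b - b * d) * q + (d * a - a * d) * p := by noncomm_ring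

end ComplementaryIdempotents

section GradingProjections

variable {𝕜 R : Type*} [Field 𝕜] [CharZero 𝕜] [Ring R] [Algebra 𝕜 R] {g d : R}

theorem half_one_add_add_half_one_sub :
    (2⁻¹ : 𝕜) • (1 + g) + (2⁻¹ : 𝕜) • (1 - g) = 1 := by
  module

theorem isIdempotentElem_half_one_add (hg : g * g = 1) :
    IsIdempotentElem ((2⁻¹ : 𝕜) • (1 + g)) := by
  rw [IsIdempotentElem, smul_mul_smul, add_mul, mul_add, mul_add, hg, one_mul, one_mul, mul_one]
  module

theorem mul_half_one_add_of_anticommute (hdg : d * g = -(g * d)) :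
    d * (2⁻¹ : 𝕜) • (1 + g) = (2⁻¹ : 𝕜) • (1 - g) * d := by
  rw [mul_smul_comm, smul_mul_assoc, mul_add, sub_mul, hdg, mul_one, one_mul]
  module

end GradingProjections

theorem stmt13_general {H A : Type*} [NormedAddCommGroup H] [InnerProductSpace ℂ H]
    [CompleteSpace H] [Ring A] [StarRing A] [Algebra ℂ A] [StarModule ℂ A]
    (Γ : H →L[ℂ] H) (hΓ2 : Γ * Γ = 1)
    (D : H →ₗ[ℂ] H)
    (hanti : ∀ x, D (Γ x) = - Γ (D x))
    (π₀ : A →⋆ₐ[ℂ] (H →L[ℂ] H)) (hcommΓ : ∀ a, Γ * π₀ a = π₀ a * Γ)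
    (hbd : ∀ a : A, ∃ T : H →L[ℂ] H, ∀ x, T x = D (π₀ a x) - π₀ a (D x)) :
    ∀ p : A × A,
      (∃ T : H →L[ℂ] H, ∀ x,
        T x = D (twistRep Γ π₀ p x) - twistRep Γ π₀ p.swap (D x))
      ∧ (∀ x, D (twistRep Γ π₀ p x) - twistRep Γ π₀ p.swap (D x)
          = ((2 : ℂ)⁻¹ • ((1 : H →L[ℂ] H) + Γ))
              (D (π₀ p.2 (((2 : ℂ)⁻¹ • ((1 : H →L[ℂ] H) - Γ)) x))
                - π₀ p.2 (D (((2 : ℂ)⁻¹ • ((1 : H →L[ℂ] H) - Γ)) x)))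
            + ((2 : ℂ)⁻¹ • ((1 : H →L[ℂ] H) - Γ))
              (D (π₀ p.1 (((2 : ℂ)⁻¹ • ((1 : H →L[ℂ] H) + Γ)) x))
                - π₀ p.1 (D (((2 : ℂ)⁻¹ • ((1 : H →L[ℂ] H) + Γ)) x)))) := by
  rintro ⟨a, a'⟩
  have hΓ2' : (Γ * Γ : Module.End ℂ H) = 1 := by
    simpa using congrArg ContinuousLinearMap.toLinearMap hΓ2
  have hDΓ : D * Γ = -(Γ * D : Module.End ℂ H) := LinearMap.ext hanti
  have hπΓ (b : A) : Commute (π₀ b : Module.End ℂ H) ((2⁻¹ : ℂ) • (1 + Γ)) :=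
    ((Commute.one_right _).add_right
      (show (π₀ b * Γ : Module.End ℂ H) = Γ * π₀ b by
        simpa using congrArg ContinuousLinearMap.toLinearMap (hcommΓ b).symm)).smul_right _
  have key := twisted_commutator_eq half_one_add_add_half_one_sub
    (isIdempotentElem_half_one_add hΓ2') (mul_half_one_add_of_anticommute hDΓ) (hπΓ a) (hπΓ a')
  -- Both conclusions are `key` evaluated at `x`, once the coercions to `Module.End` unfold.
  obtain ⟨T, hT⟩ := hbd a
  obtain ⟨T', hT'⟩ := hbd a'
  refine ⟨⟨(2⁻¹ : ℂ) • (1 + Γ) * T' * (2⁻¹ : ℂ) • (1 - Γ)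
      + (2⁻¹ : ℂ) • (1 - Γ) * T * (2⁻¹ : ℂ) • (1 + Γ), fun x => ?_⟩,
    fun x => LinearMap.congr_fun key x⟩
  refine Eq.trans ?_ (LinearMap.congr_fun key x).symm
  simp only [add_apply, mul_apply_eq_comp, hT, hT']
  rfl

/-- with `D` self-adjoint anticommuting with the grading `Γ`,
`π₀` commuting with `Γ` and having bounded commutators with `D`, the twisted
commutator `D π(a,a') − π(a',a) D` is bounded, and in fact equals
`p₊ [D, π₀(a')] p₋ + p₋ [D, π₀(a)] p₊`. -/
theorem stmt13 {H A : Type*} [NormedAddCommGroup H] [InnerProductSpace ℂ H]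
    [CompleteSpace H] [Ring A] [StarRing A] [Algebra ℂ A] [StarModule ℂ A]
    (Γ : H →L[ℂ] H) (hΓsa : IsSelfAdjoint Γ) (hΓ2 : Γ * Γ = 1)
    (D : H →ₗ[ℂ] H)
    (hsymD : ∀ x y : H, (inner ℂ (D x) y : ℂ) = inner ℂ x (D y))
    (hanti : ∀ x, D (Γ x) = - Γ (D x))
    (π₀ : A →⋆ₐ[ℂ] (H →L[ℂ] H)) (hcommΓ : ∀ a, Γ * π₀ a = π₀ a * Γ)
    (hbd : ∀ a : A, ∃ T : H →L[ℂ] H, ∀ x, T x = D (π₀ a x) - π₀ a (D x)) :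
    ∀ p : A × A,
      (∃ T : H →L[ℂ] H, ∀ x,
        T x = D (twistRep Γ π₀ p x) - twistRep Γ π₀ p.swap (D x))
      ∧ (∀ x, D (twistRep Γ π₀ p x) - twistRep Γ π₀ p.swap (D x)
          = ((2 : ℂ)⁻¹ • ((1 : H →L[ℂ] H) + Γ))
              (D (π₀ p.2 (((2 : ℂ)⁻¹ • ((1 : H →L[ℂ] H) - Γ)) x))
                - π₀ p.2 (D (((2 : ℂ)⁻¹ • ((1 : H →L[ℂ] H) - Γ)) x)))
            + ((2 : ℂ)⁻¹ • ((1 : H →L[ℂ] H) - Γ))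
              (D (π₀ p.1 (((2 : ℂ)⁻¹ • ((1 : H →L[ℂ] H) + Γ)) x))
                - π₀ p.1 (D (((2 : ℂ)⁻¹ • ((1 : H →L[ℂ] H) + Γ)) x)))) :=
  stmt13_general Γ hΓ2 D hanti π₀ hcommΓ hbd
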